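/- arXiv:1512.09094 — 2 statements merged into one kernel-verified Lean document; each statement's English description precedes it below -/
import Mathlib

section
/- Let M > 0 and R > M, and let φ: [0,∞)×[M,R] → ℝ be such that for every v ≥ 0 the function φ(v,·) is C³ on [M,R], with all partial r-derivatives up to order three jointly measurable in (v,r). Then ∫_0^∞ ∫_M^R (∂_rφ(v,r))² dr dv ≤ (16/9)·∫_0^∞ ∫_M^R ( ∂_r∂_r( (r−M)²·∂_rφ )(v,r) )² dr dv, both sides taking values in [0,∞]. -/
/-!
Fiberwise in `v`, write `f = ∂_rφ(v, ·)` on `[M, R]` and `x = r - M`. The Hardy inequality in the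
form `∫ p² ≤ 4/(2c-1)² ∫ (c p + x p')²` (valid for `c > 1/2` and `p ∈ C¹`, with no boundary
condition) applied with `c = 2, p = f` and then with `c = 1, p = 2f + x f'` gives
`∫ f² ≤ (4/9) ∫ (2f + x f')² ≤ (16/9) ∫ (2f + 4x f' + x² f'')²`, and the last integrand is
`(∂_r²(x² f))²`.
-/

open MeasureTheory Set

/-- The partial derivative in the second (radial) variable `r`. -/
noncomputable def pr (ψ : ℝ → ℝ → ℝ) (v r : ℝ) : ℝ := deriv (fun s => ψ v s) r

/-- The partial derivative in the first (advanced-time) variable `v`. -/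
noncomputable def pv (ψ : ℝ → ℝ → ℝ) (v r : ℝ) : ℝ := deriv (fun t => ψ t r) v

/-- The spherically symmetric reduced wave equation on extremal Reissner--Nordström,
in ingoing Eddington--Finkelstein coordinates `(v, r)`, with mass parameter `M`:
`((r−M)²/r²)·∂_r²ψ + 2·∂_v∂_rψ + (2/r)·∂_vψ + (2(r−M)/r²)·∂_rψ = 0`. -/
def WaveEq (M : ℝ) (ψ : ℝ → ℝ → ℝ) (v r : ℝ) : Prop :=
  ((r - M) ^ 2 / r ^ 2) * pr (pr ψ) v r + 2 * pv (pr ψ) v r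
    + (2 / r) * pv ψ v r + (2 * (r - M) / r ^ 2) * pr ψ v r = 0

theorem integral_sq_le_hardy {a b c : ℝ} (hab : a ≤ b) (hc : 1 / 2 < c) {p p' : ℝ → ℝ}
    (hp : ContinuousOn p (Icc a b)) (hp' : ContinuousOn p' (Icc a b))
    (hderiv : ∀ x ∈ Ioo a b, HasDerivAt p (p' x) x) :
    ∫ x in a..b, p x ^ 2 ≤
      4 / (2 * c - 1) ^ 2 * ∫ x in a..b, (c * p x + (x - a) * p' x) ^ 2 := by
  set k := 2 * c - 1 with hk_def
  have hk : 0 < k := by linarith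
  clear_value k
  set q : ℝ → ℝ := fun x => c * p x + (x - a) * p' x
  -- `2 p q = k p² + F'` and `F a = 0 ≤ F b`, so no boundary condition is needed.
  set F : ℝ → ℝ := fun x => (x - a) * p x ^ 2
  set F' : ℝ → ℝ := fun x => p x ^ 2 + 2 * (x - a) * p x * p' x
  have hsub : ContinuousOn (fun x : ℝ => x - a) (Icc a b) := by fun_prop
  have hq : ContinuousOn q (Icc a b) := (continuousOn_const.mul hp).add (hsub.mul hp')
  have hF' : ContinuousOn F' (Icc a b) :=
    (hp.pow 2).add (((continuousOn_const.mul hsub).mul hp).mul hp')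
  have hFderiv x (hx : x ∈ Ioo a b) : HasDerivAt F (F' x) x :=
    (((hasDerivAt_id x).sub_const a).mul ((hderiv x hx).fun_pow 2)).congr_deriv
      (by simp only [F', id]; ring)
  have integrable {g : ℝ → ℝ} (hg : ContinuousOn g (Icc a b)) : IntervalIntegrable g volume a b :=
    hg.intervalIntegrable_of_Icc hab
  have pointwise : ∀ x ∈ Icc a b, k / 2 * p x ^ 2 + F' x ≤ 2 / k * q x ^ 2 := fun x _ => by
    have key : 2 * p x * q x = k * p x ^ 2 + F' x := by simp only [q, F', hk_def]; ring
    have amgm : 2 * p x * q x - k / 2 * p x ^ 2 + 2 / k * (q x - k / 2 * p x) ^ 2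
        = 2 / k * q x ^ 2 := by
      field_simp; ring
    linarith [show 0 ≤ 2 / k * (q x - k / 2 * p x) ^ 2 by positivity]
  have hFTC : ∫ x in a..b, F' x = F b - F a :=
    intervalIntegral.integral_eq_sub_of_hasDerivAt_of_le hab (hsub.mul (hp.pow 2)) hFderiv
      (integrable hF')
  have hFb : 0 ≤ F b := mul_nonneg (sub_nonneg.2 hab) (sq_nonneg _)
  have hFa : F a = 0 := by simp [F]
  have hmain : k / 2 * ∫ x in a..b, p x ^ 2 ≤ 2 / k * ∫ x in a..b, q x ^ 2 := by
    have := intervalIntegral.integral_mono_on hab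
      (((integrable (hp.pow 2)).const_mul (k / 2)).add (integrable hF'))
      ((integrable (hq.pow 2)).const_mul (2 / k)) pointwise
    rw [intervalIntegral.integral_add ((integrable (hp.pow 2)).const_mul _) (integrable hF'),
      intervalIntegral.integral_const_mul, intervalIntegral.integral_const_mul, hFTC, hFa] at this
    simp only [Pi.pow_apply] at this
    linarith
  calc ∫ x in a..b, p x ^ 2 = 2 / k * (k / 2 * ∫ x in a..b, p x ^ 2) := by field_simp
    _ ≤ 2 / k * (2 / k * ∫ x in a..b, q x ^ 2) := by gcongr
    _ = 4 / k ^ 2 * ∫ x in a..b, q x ^ 2 := by ring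

theorem setLIntegral_Icc_ofReal_sq_eq {a b : ℝ} (hab : a ≤ b) {g h : ℝ → ℝ}
    (hg : ContinuousOn g (Icc a b)) (hgh : EqOn h g (Ioo a b)) :
    ∫⁻ x in Icc a b, ENNReal.ofReal (h x ^ 2) = ENNReal.ofReal (∫ x in a..b, g x ^ 2) := by
  have hint : IntegrableOn (fun x => g x ^ 2) (Ioo a b) :=
    ((hg.pow 2).integrableOn_compact isCompact_Icc).mono_set Ioo_subset_Icc_self
  rw [intervalIntegral.integral_of_le hab, integral_Ioc_eq_integral_Ioo,
    ofReal_integral_eq_lintegral_ofReal hint (ae_of_all _ fun _ => sq_nonneg _),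
    ← setLIntegral_congr Ioo_ae_eq_Icc]
  exact setLIntegral_congr_fun measurableSet_Ioo fun x hx => by rw [hgh hx]

theorem DifferentiableOn.hasDerivAt_derivWithin_Icc {f : ℝ → ℝ} {a b x : ℝ}
    (hf : DifferentiableOn ℝ f (Icc a b)) (hx : x ∈ Ioo a b) :
    HasDerivAt f (derivWithin f (Icc a b) x) x :=
  (hf x (Ioo_subset_Icc_self hx)).hasDerivWithinAt.hasDerivAt (Icc_mem_nhds hx.1 hx.2)

theorem setLIntegral_sq_deriv_le_hardy {M R : ℝ} (hMR : M < R) {ψ : ℝ → ℝ}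
    (hψ : ContDiffOn ℝ 3 ψ (Icc M R)) :
    ∫⁻ r in Icc M R, ENNReal.ofReal (deriv ψ r ^ 2) ≤
      16 / 9 * ∫⁻ r in Icc M R,
        ENNReal.ofReal (deriv (fun s => deriv (fun t => (t - M) ^ 2 * deriv ψ t) s) r ^ 2) := by
  have hs : UniqueDiffOn ℝ (Icc M R) := uniqueDiffOn_Icc hMR
  set f₀ := derivWithin ψ (Icc M R)
  set f₁ := derivWithin f₀ (Icc M R)
  set f₂ := derivWithin f₁ (Icc M R)
  have h₀ : ContDiffOn ℝ 2 f₀ (Icc M R) := hψ.derivWithin hs (by norm_num)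
  have h₁ : ContDiffOn ℝ 1 f₁ (Icc M R) := h₀.derivWithin hs (by norm_num)
  have c₀ := h₀.continuousOn
  have c₁ := h₁.continuousOn
  have c₂ : ContinuousOn f₂ (Icc M R) := h₁.continuousOn_derivWithin hs le_rfl
  have dψ x (hx : x ∈ Ioo M R) : HasDerivAt ψ (f₀ x) x :=
    (hψ.differentiableOn (by norm_num)).hasDerivAt_derivWithin_Icc hx
  have d₀ x (hx : x ∈ Ioo M R) : HasDerivAt f₀ (f₁ x) x :=
    (h₀.differentiableOn (by norm_num)).hasDerivAt_derivWithin_Icc hx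
  have d₁ x (hx : x ∈ Ioo M R) : HasDerivAt f₁ (f₂ x) x :=
    (h₁.differentiableOn one_ne_zero).hasDerivAt_derivWithin_Icc hx
  set p : ℝ → ℝ := fun r => 2 * f₀ r + (r - M) * f₁ r
  set p' : ℝ → ℝ := fun r => 3 * f₁ r + (r - M) * f₂ r
  have hsub : ContinuousOn (fun r : ℝ => r - M) (Icc M R) := by fun_prop
  have cp : ContinuousOn p (Icc M R) := (continuousOn_const.mul c₀).add (hsub.mul c₁)
  have cp' : ContinuousOn p' (Icc M R) := (continuousOn_const.mul c₁).add (hsub.mul c₂)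
  have dp x (hx : x ∈ Ioo M R) : HasDerivAt p (p' x) x :=
    (((d₀ x hx).const_mul 2).add (((hasDerivAt_id x).sub_const M).mul (d₁ x hx))).congr_deriv
      (by simp only [p', id]; ring)
  have first_deriv : EqOn (deriv fun t => (t - M) ^ 2 * deriv ψ t) (fun r => (r - M) * p r)
      (Ioo M R) := fun x hx => by
    have hψ' : EqOn (fun t => (t - M) ^ 2 * deriv ψ t) (fun t => (t - M) ^ 2 * f₀ t) (Ioo M R) :=
      fun t ht => congrArg ((t - M) ^ 2 * ·) (dψ t ht).deriv
    rw [hψ'.deriv isOpen_Ioo hx]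
    exact ((((hasDerivAt_id x).sub_const M).fun_pow 2).mul (d₀ x hx)).deriv.trans
      (by simp only [p, id]; ring)
  have second_deriv : EqOn (deriv fun s => deriv (fun t => (t - M) ^ 2 * deriv ψ t) s)
      (fun r => 1 * p r + (r - M) * p' r) (Ioo M R) := fun x hx => by
    rw [first_deriv.deriv isOpen_Ioo hx]
    exact (((hasDerivAt_id x).sub_const M).mul (dp x hx)).deriv.trans (by simp only [id])
  have cq : ContinuousOn (fun r => 1 * p r + (r - M) * p' r) (Icc M R) :=
    (continuousOn_const.mul cp).add (hsub.mul cp')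
  have step₁ := integral_sq_le_hardy hMR.le (by norm_num : (1 : ℝ) / 2 < 2) c₀ c₁ d₀
  have step₂ := integral_sq_le_hardy hMR.le (by norm_num : (1 : ℝ) / 2 < 1) cp cp' dp
  rw [setLIntegral_Icc_ofReal_sq_eq hMR.le c₀ fun x hx => (dψ x hx).deriv,
    setLIntegral_Icc_ofReal_sq_eq hMR.le cq second_deriv,
    ← ENNReal.ofReal_ofNat 16, ← ENNReal.ofReal_ofNat 9,
    ← ENNReal.ofReal_div_of_pos (by norm_num), ← ENNReal.ofReal_mul (by norm_num)]
  refine ENNReal.ofReal_le_ofReal (step₁.trans ?_)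
  calc _ ≤ 4 / (2 * 2 - 1) ^ 2 *
        (4 / (2 * 1 - 1) ^ 2 * ∫ x in M..R, (1 * p x + (x - M) * p' x) ^ 2) :=
        mul_le_mul_of_nonneg_left step₂ (by norm_num)
    _ = _ := by ring

theorem hardy_chain_general (M R : ℝ) (hR : M < R) (φ : ℝ → ℝ → ℝ)
    (hreg : ∀ v ∈ Set.Ici (0 : ℝ), ContDiffOn ℝ 3 (fun r => φ v r) (Set.Icc M R)) :
    (∫⁻ v in Set.Ici (0 : ℝ), ∫⁻ r in Set.Icc M R,
        ENNReal.ofReal ((pr φ v r) ^ 2))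
      ≤ (16 / 9 : ENNReal) *
        ∫⁻ v in Set.Ici (0 : ℝ), ∫⁻ r in Set.Icc M R,
          ENNReal.ofReal
            ((pr (pr (fun v' r' => (r' - M) ^ 2 * pr φ v' r')) v r) ^ 2) := by
  rw [← lintegral_const_mul' _ _ (by finiteness)]
  exact setLIntegral_mono' measurableSet_Ici fun v hv =>
    setLIntegral_sq_deriv_le_hardy hR (hreg v hv)

/-- **The chain of boundary-free Hardy inequalities (5.30)–(5.31):** composing the
Hardy inequality (4.3) with exponents `p = −2` and `p = −4` fiberwise in `v` gives
`∫∫ (∂_rφ)² ≤ (16/9)·∫∫ (∂_r∂_r((r−M)²∂_rφ))²`. -/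
theorem hardy_chain (M R : ℝ) (hM : 0 < M) (hR : M < R) (φ : ℝ → ℝ → ℝ)
    (hreg : ∀ v ∈ Set.Ici (0 : ℝ), ContDiffOn ℝ 3 (fun r => φ v r) (Set.Icc M R))
    (hmeas0 : Measurable (Function.uncurry φ))
    (hmeas1 : Measurable (Function.uncurry (pr φ)))
    (hmeas2 : Measurable (Function.uncurry (pr (pr φ))))
    (hmeas3 : Measurable (Function.uncurry (pr (pr (pr φ))))) :
    (∫⁻ v in Set.Ici (0 : ℝ), ∫⁻ r in Set.Icc M R,
        ENNReal.ofReal ((pr φ v r) ^ 2))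
      ≤ (16 / 9 : ENNReal) *
        ∫⁻ v in Set.Ici (0 : ℝ), ∫⁻ r in Set.Icc M R,
          ENNReal.ofReal
            ((pr (pr (fun v' r' => (r' - M) ^ 2 * pr φ v' r')) v r) ^ 2) :=
  hardy_chain_general M R hR φ hreg
end

section
/- Let M > 0, R > M, and p ∈ ℝ with p ≠ −1. Let f: (M,R] → ℝ be C¹ with lim_{r→M⁺} (r−M)^{p+1}·f(r)² = 0. If ∫_M^R (r−M)^{p+2}·f'(r)² dr < ∞, then ∫_M^R (r−M)^p·f(r)² dr < ∞ and ∫_M^R (r−M)^p·f(r)² dr ≤ (4/(p+1)²)·∫_M^R (r−M)^{p+2}·f'(r)² dr + (2/(p+1))·(R−M)^{p+1}·f(R)². -/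
/-!
With `g r = (r - M) ^ (p + 1) * f r ^ 2` one has
`g' = (p + 1) (r - M) ^ p f ^ 2 + 2 (r - M) ^ (p + 1) f f'`, and completing the square gives
`(r - M) ^ p f ^ 2 ≤ 2 / (p + 1) * g' + 4 / (p + 1) ^ 2 * (r - M) ^ (p + 2) f' ^ 2` pointwise.
Integrating over `[ε, R]` and letting `ε → M⁺`, where `g ε → 0`, gives the inequality; since the
integrand is nonnegative, the same uniform bound on the truncated integrals gives integrability.
-/

open MeasureTheory Set Filter Topology

lemma sub_rpow_mul_sq_nonneg {M x : ℝ} (q y : ℝ) (hx : M ≤ x) : 0 ≤ (x - M) ^ q * y ^ 2 :=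
  mul_nonneg (Real.rpow_nonneg (sub_nonneg.2 hx) q) (sq_nonneg y)

lemma continuousOn_sub_rpow_mul_sq {f : ℝ → ℝ} {s : Set ℝ} {M : ℝ} (q : ℝ)
    (hf : ContinuousOn f s) (hs : ∀ x ∈ s, M < x) :
    ContinuousOn (fun r => (r - M) ^ q * f r ^ 2) s :=
  ((continuousOn_id.sub continuousOn_const).rpow_const fun x hx =>
    Or.inl (sub_ne_zero.2 (hs x hx).ne')).mul (hf.pow 2)

lemma hardy_integrand_le (p t u v : ℝ) (ht : 0 < t) (hp : p + 1 ≠ 0) :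
    t ^ p * u ^ 2 ≤
      2 / (p + 1) * ((p + 1) * t ^ p * u ^ 2 + 2 * t ^ (p + 1) * u * v)
        + 4 / (p + 1) ^ 2 * (t ^ (p + 2) * v ^ 2) := by
  have h1 : t ^ (p + 1) = t ^ p * t := by rw [Real.rpow_add ht, Real.rpow_one]
  have h2 : t ^ (p + 2) = t ^ p * t ^ 2 := by
    rw [Real.rpow_add ht, ← Real.rpow_natCast]; norm_num
  have hsq : 2 / (p + 1) * ((p + 1) * t ^ p * u ^ 2 + 2 * (t ^ p * t) * u * v)
        + 4 / (p + 1) ^ 2 * (t ^ p * t ^ 2 * v ^ 2) - t ^ p * u ^ 2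
      = t ^ p * (u + 2 * t * v / (p + 1)) ^ 2 := by
    field_simp
    ring
  rw [h1, h2, ← sub_nonneg, hsq]
  have := Real.rpow_nonneg ht.le p
  positivity

lemma hasDerivAt_sub_rpow_mul_sq {f : ℝ → ℝ} {f' M q x : ℝ} (hx : x ≠ M)
    (hf : HasDerivAt f f' x) :
    HasDerivAt (fun r => (r - M) ^ (q + 1) * f r ^ 2)
      ((q + 1) * (x - M) ^ q * f x ^ 2 + 2 * (x - M) ^ (q + 1) * f x * f') x := by
  have hpow : HasDerivAt (fun r => (r - M) ^ (q + 1)) ((q + 1) * (x - M) ^ q) x := by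
    simpa using ((hasDerivAt_id x).sub_const M).rpow_const (p := q + 1)
      (Or.inl (sub_ne_zero.2 hx))
  refine (hpow.mul (hf.pow 2)).congr_deriv ?_
  simp only [Pi.pow_apply]
  norm_num
  ring

lemma hardy_inequality_Ioc {f f' : ℝ → ℝ} {M p a b : ℝ} (hMa : M < a) (hab : a ≤ b)
    (hp : p + 1 ≠ 0) (hf : ContinuousOn f (Icc a b))
    (hf' : ∀ x ∈ Ioo a b, HasDerivAt f (f' x) x)
    (hint : IntegrableOn (fun r => (r - M) ^ (p + 2) * f' r ^ 2) (Ioc a b)) :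
    ∫ r in Ioc a b, (r - M) ^ p * f r ^ 2 ≤
      2 / (p + 1) * ((b - M) ^ (p + 1) * f b ^ 2 - (a - M) ^ (p + 1) * f a ^ 2)
        + 4 / (p + 1) ^ 2 * ∫ r in Ioc a b, (r - M) ^ (p + 2) * f' r ^ 2 := by
  have hM : ∀ x ∈ Icc a b, M < x := fun x hx => hMa.trans_le hx.1
  have hA : IntegrableOn (fun r => (r - M) ^ p * f r ^ 2) (Ioc a b) :=
    (continuousOn_sub_rpow_mul_sq p hf hM).integrableOn_Icc.mono_set Ioc_subset_Icc_self
  have hFTC := intervalIntegral.integral_le_sub_of_hasDeriv_right_of_le hab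
    (g := fun r => 2 / (p + 1) * ((r - M) ^ (p + 1) * f r ^ 2))
    (φ := fun r => (r - M) ^ p * f r ^ 2 - 4 / (p + 1) ^ 2 * ((r - M) ^ (p + 2) * f' r ^ 2))
    (continuousOn_const.mul (continuousOn_sub_rpow_mul_sq (p + 1) hf hM))
    (fun x hx => ((hasDerivAt_sub_rpow_mul_sq (hMa.trans hx.1).ne' (hf' x hx)).const_mul
      _).hasDerivWithinAt)
    ((integrableOn_Icc_iff_integrableOn_Ioc).2 (hA.sub (hint.const_mul (4 / (p + 1) ^ 2))))
    (fun x hx => by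
      have := hardy_integrand_le p (x - M) (f x) (f' x) (sub_pos.2 (hMa.trans hx.1)) hp
      linarith)
  rw [intervalIntegral.integral_of_le hab, integral_sub hA (hint.const_mul _),
    integral_const_mul] at hFTC
  linarith

lemma integrableOn_Ioc_and_setIntegral_le_of_tendsto {f h : ℝ → ℝ} {a b L : ℝ}
    (hf : ContinuousOn f (Ioc a b)) (hf_nonneg : ∀ x ∈ Ioc a b, 0 ≤ f x)
    (hle : ∀ᶠ ε in 𝓝[>] a, ∫ x in Ioc ε b, f x ≤ h ε) (hh : Tendsto h (𝓝[>] a) (𝓝 L)) :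
    IntegrableOn f (Ioc a b) ∧ ∫ x in Ioc a b, f x ≤ L := by
  have hcover : AECover (volume.restrict (Ioc a b)) (𝓝[>] a) (fun ε => Ioc ε b) :=
    aecover_Ioc_of_Ioc (tendsto_id.mono_left nhdsWithin_le_nhds) tendsto_const_nhds
  have hrestrict : ∀ᶠ ε in 𝓝[>] a,
      (volume.restrict (Ioc a b)).restrict (Ioc ε b) = volume.restrict (Ioc ε b) := by
    filter_upwards [self_mem_nhdsWithin] with ε (hε : a < ε)
    rw [Measure.restrict_restrict measurableSet_Ioc,
      inter_eq_left.2 (Ioc_subset_Ioc_left hε.le)]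
  have hbound : ∀ᶠ ε in 𝓝[>] a,
      ∫⁻ x in Ioc ε b, ‖f x‖ₑ ∂volume.restrict (Ioc a b) ≤ ENNReal.ofReal (L + 1) := by
    filter_upwards [self_mem_nhdsWithin, hrestrict, hle, hh.eventually (gt_mem_nhds (lt_add_one L))]
      with ε (hε : a < ε) hε_restrict hε_le hε_h
    have hsub : Icc ε b ⊆ Ioc a b := fun x hx => ⟨hε.trans_le hx.1, hx.2⟩
    have hε_int : IntegrableOn f (Ioc ε b) :=
      (hf.mono hsub).integrableOn_Icc.mono_set Ioc_subset_Icc_self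
    rw [hε_restrict, ← ofReal_integral_norm_eq_lintegral_enorm hε_int]
    refine ENNReal.ofReal_le_ofReal ?_
    rw [setIntegral_congr_fun measurableSet_Ioc fun x hx =>
      Real.norm_of_nonneg (hf_nonneg x (Ioc_subset_Ioc_left hε.le hx))]
    linarith
  have hfi : IntegrableOn f (Ioc a b) :=
    hcover.integrable_of_lintegral_enorm_bounded _ (hf.aestronglyMeasurable measurableSet_Ioc)
      hbound
  refine ⟨hfi, le_of_tendsto_of_tendsto
    (hcover.integral_tendsto_of_countably_generated hfi) hh ?_⟩
  filter_upwards [hrestrict, hle] with ε hε_restrict hε_le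
  rwa [hε_restrict]

theorem first_hardy_inequality_general (M R p : ℝ) (hR : M < R)
    (hp : p ≠ -1) (f : ℝ → ℝ) (hf : ContDiffOn ℝ 1 f (Set.Ioc M R))
    (hlim : Filter.Tendsto (fun r => (r - M) ^ (p + 1) * (f r) ^ 2)
      (nhdsWithin M (Set.Ioi M)) (nhds 0))
    (hint : MeasureTheory.IntegrableOn
      (fun r => (r - M) ^ (p + 2) * (deriv f r) ^ 2) (Set.Ioc M R)) :
    MeasureTheory.IntegrableOn (fun r => (r - M) ^ p * (f r) ^ 2) (Set.Ioc M R) ∧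
    (∫ r in Set.Ioc M R, (r - M) ^ p * (f r) ^ 2)
      ≤ (4 / (p + 1) ^ 2) *
          (∫ r in Set.Ioc M R, (r - M) ^ (p + 2) * (deriv f r) ^ 2)
        + (2 / (p + 1)) * (R - M) ^ (p + 1) * (f R) ^ 2 := by
  have hp1 : p + 1 ≠ 0 := by contrapose! hp; linarith
  have hfc : ContinuousOn f (Ioc M R) := hf.continuousOn
  have hf' : ∀ x ∈ Ioo M R, HasDerivAt f (deriv f x) x := fun x hx =>
    ((hf.differentiableOn one_ne_zero x (Ioo_subset_Ioc_self hx)).differentiableAt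
      (mem_of_superset (Ioo_mem_nhds hx.1 hx.2) Ioo_subset_Ioc_self)).hasDerivAt
  have hnear : ∀ᶠ ε in 𝓝[>] M, ε ∈ Ioo M R := Ioo_mem_nhdsGT hR
  set J := ∫ r in Ioc M R, (r - M) ^ (p + 2) * deriv f r ^ 2
  refine (integrableOn_Ioc_and_setIntegral_le_of_tendsto
    (h := fun ε => 2 / (p + 1) * ((R - M) ^ (p + 1) * f R ^ 2 - (ε - M) ^ (p + 1) * f ε ^ 2)
      + 4 / (p + 1) ^ 2 * J)
    (L := 2 / (p + 1) * ((R - M) ^ (p + 1) * f R ^ 2) + 4 / (p + 1) ^ 2 * J)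
    (continuousOn_sub_rpow_mul_sq p hfc fun x hx => hx.1)
    (fun x hx => sub_rpow_mul_sq_nonneg _ _ hx.1.le)
    ?_ ?_).imp_right fun h => h.trans_eq (by ring)
  · filter_upwards [hnear] with ε hε
    have htrunc := hardy_inequality_Ioc hε.1 hε.2.le hp1
      (hfc.mono fun x hx => ⟨hε.1.trans_le hx.1, hx.2⟩) (fun x hx => hf' x ⟨hε.1.trans hx.1, hx.2⟩)
      (hint.mono_set (Ioc_subset_Ioc_left hε.1.le))
    have hJ : ∫ r in Ioc ε R, (r - M) ^ (p + 2) * deriv f r ^ 2 ≤ J :=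
      setIntegral_mono_set hint
        ((ae_restrict_mem measurableSet_Ioc).mono fun x hx => sub_rpow_mul_sq_nonneg _ _ hx.1.le)
        (Ioc_subset_Ioc_left hε.1.le).eventuallyLE
    have := mul_le_mul_of_nonneg_left hJ (by positivity : (0 : ℝ) ≤ 4 / (p + 1) ^ 2)
    linarith
  · simpa using ((tendsto_const_nhds.sub hlim).const_mul (2 / (p + 1))).add_const
      (4 / (p + 1) ^ 2 * J)

/-- **The first Hardy inequality (Proposition 4.2, estimate (4.2)),** one-dimensional form:
if `∫_M^R (r−M)^{p+2} f'² dr < ∞` and `(r−M)^{p+1} f² → 0` as `r → M⁺`, then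
`∫_M^R (r−M)^p f² dr` is finite and bounded by
`(4/(p+1)²)·∫_M^R (r−M)^{p+2} f'² dr + (2/(p+1))·(R−M)^{p+1} f(R)²`. -/
theorem first_hardy_inequality (M R p : ℝ) (hM : 0 < M) (hR : M < R)
    (hp : p ≠ -1) (f : ℝ → ℝ) (hf : ContDiffOn ℝ 1 f (Set.Ioc M R))
    (hlim : Filter.Tendsto (fun r => (r - M) ^ (p + 1) * (f r) ^ 2)
      (nhdsWithin M (Set.Ioi M)) (nhds 0))
    (hint : MeasureTheory.IntegrableOn
      (fun r => (r - M) ^ (p + 2) * (deriv f r) ^ 2) (Set.Ioc M R)) :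
    MeasureTheory.IntegrableOn (fun r => (r - M) ^ p * (f r) ^ 2) (Set.Ioc M R) ∧
    (∫ r in Set.Ioc M R, (r - M) ^ p * (f r) ^ 2)
      ≤ (4 / (p + 1) ^ 2) *
          (∫ r in Set.Ioc M R, (r - M) ^ (p + 2) * (deriv f r) ^ 2)
        + (2 / (p + 1)) * (R - M) ^ (p + 1) * (f R) ^ 2 :=
  first_hardy_inequality_general M R p hR hp f hf hlim hint
end
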